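/- Let f : ℝ → ℝ be continuously differentiable and let (θ, ψ) : [0, ∞) → ℝ² be a differentiable curve satisfying θ′(t) = −f′(−θ(t)ψ(t))ψ(t) and ψ′(t) = f′(θ(t)ψ(t))θ(t). Then for all t, d/dt (θ(t)² + ψ(t)²) = 2[f′(θ(t)ψ(t)) − f′(−θ(t)ψ(t))]·θ(t)ψ(t). Moreover, if f is concave, this expression is nonpositive for all t, so t ↦ θ(t)² + ψ(t)² is nonincreasing. -/

import Mathlib

/-!
Along the field, `(θ² + ψ²)′ = 2(θθ′ + ψψ′) = 2(f′(u) − f′(−u))·u` with `u = θψ`. For concave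
`f` the derivative `f′` is antitone, so `f′(u) − f′(−u)` and `u − (−u) = 2u` have opposite signs,
and the squared norm has a nonpositive derivative on `[0, ∞)`.
-/

open Set

lemma Antitone.sub_neg_mul_self_nonpos {g : ℝ → ℝ} (hg : Antitone g) (x : ℝ) :
    (g x - g (-x)) * x ≤ 0 := by
  have h := (antivary_id_iff.2 hg).sub_mul_sub_nonpos (-x) x
  simp only [id, sub_neg_eq_add] at h
  nlinarith

lemma Convex.antitoneOn_of_hasDerivWithinAt_nonpos {D : Set ℝ} (hD : Convex ℝ D)
    {g g' : ℝ → ℝ} (hg : ∀ t ∈ D, HasDerivWithinAt g (g' t) D t) (hg' : ∀ t ∈ D, g' t ≤ 0) :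
    AntitoneOn g D :=
  _root_.antitoneOn_of_hasDerivWithinAt_nonpos hD (fun t ht ↦ (hg t ht).continuousWithinAt)
    (fun t ht ↦ (hg t (interior_subset ht)).mono interior_subset)
    (fun t ht ↦ hg' t (interior_subset ht))

theorem nonsaturating_dirac_gan_norm_nonincreasing
    (f : ℝ → ℝ) (hf : ContDiff ℝ 1 f) (θ ψ : ℝ → ℝ)
    (hθ : ∀ t ∈ Set.Ici (0 : ℝ),
      HasDerivWithinAt θ (-(deriv f (-(θ t * ψ t))) * ψ t) (Set.Ici (0 : ℝ)) t)
    (hψ : ∀ t ∈ Set.Ici (0 : ℝ),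
      HasDerivWithinAt ψ (deriv f (θ t * ψ t) * θ t) (Set.Ici (0 : ℝ)) t) :
    (∀ t ∈ Set.Ici (0 : ℝ),
      HasDerivWithinAt (fun s => θ s ^ 2 + ψ s ^ 2)
        (2 * (deriv f (θ t * ψ t) - deriv f (-(θ t * ψ t))) * (θ t * ψ t))
        (Set.Ici (0 : ℝ)) t) ∧
    (ConcaveOn ℝ Set.univ f →
      (∀ t ∈ Set.Ici (0 : ℝ),
        2 * (deriv f (θ t * ψ t) - deriv f (-(θ t * ψ t))) * (θ t * ψ t) ≤ 0) ∧
      AntitoneOn (fun s => θ s ^ 2 + ψ s ^ 2) (Set.Ici (0 : ℝ))) := by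
  have hderiv : ∀ t ∈ Ici (0 : ℝ), HasDerivWithinAt (fun s ↦ θ s ^ 2 + ψ s ^ 2)
      (2 * (deriv f (θ t * ψ t) - deriv f (-(θ t * ψ t))) * (θ t * ψ t)) (Ici 0) t :=
    fun t ht ↦ (((hθ t ht).fun_pow 2).fun_add ((hψ t ht).fun_pow 2)).congr_deriv (by ring)
  refine ⟨hderiv, fun hconc ↦ ?_⟩
  have hanti : Antitone (deriv f) := by
    simpa using hconc.antitoneOn_deriv fun x _ ↦ hf.differentiable one_ne_zero x
  have hnonpos : ∀ t ∈ Ici (0 : ℝ),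
      2 * (deriv f (θ t * ψ t) - deriv f (-(θ t * ψ t))) * (θ t * ψ t) ≤ 0 := fun t _ ↦ by
    rw [mul_assoc]
    exact mul_nonpos_of_nonneg_of_nonpos zero_le_two (hanti.sub_neg_mul_self_nonpos _)
  exact ⟨hnonpos, (convex_Ici 0).antitoneOn_of_hasDerivWithinAt_nonpos hderiv hnonpos⟩
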